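/- arXiv:cs/0701057 — 2 statements merged into one kernel-verified Lean document; each statement's English description precedes it below -/
import Mathlib

section
/- Let λ ∈ [0,1), let W be a propagation matrix, and let Ψ^{(∞)} be a fixed point of the basic cooperative optimization update T_λ. If x̃ is a configuration such that, for every i ∈ {1,…,n}, x̃ globally minimizes the function x ↦ (1−λ) E_i(x) + λ ∑_{j=1}^n w_{ij} Ψ^{(∞)}_j(x_j) over all configurations (i.e., x̃ is a consensus solution at the equilibrium), then x̃ is a global minimum of E: E(x̃) ≤ E(x) for every configuration x. -/
open Finset Filter Topology

/-- A propagation matrix: nonnegative entries with unit column sums. -/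
def IsPropagationMatrix {n : ℕ} (W : Fin n → Fin n → ℝ) : Prop :=
  (∀ i j, 0 ≤ W i j) ∧ ∀ j, ∑ i, W i j = 1

/-- The basic cooperative optimization update `T_λ`:
`T_λ(Ψ)_i(a) = min_{x : x_i = a} ((1−λ) E_i(x) + λ ∑_j w_{ij} Ψ_j(x_j))`. -/
noncomputable def coopT {n : ℕ} {D : Fin n → Type} [∀ i, Fintype (D i)]
    [∀ i, Nonempty (D i)]
    (E : Fin n → ((i : Fin n) → D i) → ℝ) (W : Fin n → Fin n → ℝ) (lam : ℝ)
    (Ψ : (i : Fin n) → D i → ℝ) : (i : Fin n) → D i → ℝ :=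
  fun i a =>
    Finset.univ.inf' Finset.univ_nonempty
      (fun x : (j : Fin n) → D j =>
        (1 - lam) * E i (Function.update x i a) +
          lam * ∑ j, W i j * Ψ j (Function.update x i a j))

/-- The total objective `E(x) = ∑ i, E_i(x)`. -/
def objective {n : ℕ} {D : Fin n → Type}
    (E : Fin n → ((i : Fin n) → D i) → ℝ) (x : (i : Fin n) → D i) : ℝ :=
  ∑ i, E i x

/-- `x̃` is a consensus solution with respect to the state `Ψ` and cooperation strength
`lam`: for every `i`, `x̃` globally minimizes the modified sub-objective
`x ↦ (1−λ) E_i(x) + λ ∑_j w_{ij} Ψ_j(x_j)`. -/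
def IsConsensusState {n : ℕ} {D : Fin n → Type}
    (E : Fin n → ((i : Fin n) → D i) → ℝ) (W : Fin n → Fin n → ℝ) (lam : ℝ)
    (Ψ : (i : Fin n) → D i → ℝ) (xt : (i : Fin n) → D i) : Prop :=
  ∀ i, ∀ x : (j : Fin n) → D j,
    (1 - lam) * E i xt + lam * ∑ j, W i j * Ψ j (xt j)
      ≤ (1 - lam) * E i x + lam * ∑ j, W i j * Ψ j (x j)

/-! At a fixed point `Ψ` of `T_λ`, each `Ψ_i(x_i)` is at most the modified sub-objective
`m_i(x) = (1-λ) E_i(x) + λ ∑_j w_{ij} Ψ_j(x_j)`, with equality at a consensus solution `x̃`.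
Since the columns of `W` sum to one, `∑_i m_i(x) = (1-λ) E(x) + λ ∑_j Ψ_j(x_j)`; summing the
inequality therefore gives `∑_j Ψ_j(x_j) ≤ E(x)`, with equality at `x̃`. Summing the consensus
inequalities `m_i(x̃) ≤ m_i(x)` then yields `E(x̃) ≤ (1-λ) E(x) + λ ∑_j Ψ_j(x_j) ≤ E(x)`. -/

section CooperativeOptimization

variable {n : ℕ} {D : Fin n → Type} (E : Fin n → ((i : Fin n) → D i) → ℝ)
  (W : Fin n → Fin n → ℝ) (lam : ℝ) (Ψ : (i : Fin n) → D i → ℝ)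

def modifiedObjective (i : Fin n) (x : (j : Fin n) → D j) : ℝ :=
  (1 - lam) * E i x + lam * ∑ j, W i j * Ψ j (x j)

theorem sum_modifiedObjective (hW : ∀ j, ∑ i, W i j = 1) (x : (j : Fin n) → D j) :
    ∑ i, modifiedObjective E W lam Ψ i x = (1 - lam) * objective E x + lam * ∑ j, Ψ j (x j) := by
  have hswap : ∑ i, ∑ j, W i j * Ψ j (x j) = ∑ j, Ψ j (x j) := by
    rw [sum_comm]
    simp only [← sum_mul, hW, one_mul]
  simp only [modifiedObjective, sum_add_distrib, ← mul_sum, hswap, objective]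

variable [∀ i, Fintype (D i)] [∀ i, Nonempty (D i)]

theorem coopT_apply_le_modifiedObjective (i : Fin n) (x : (j : Fin n) → D j) :
    coopT E W lam Ψ i (x i) ≤ modifiedObjective E W lam Ψ i x := by
  calc coopT E W lam Ψ i (x i)
      ≤ modifiedObjective E W lam Ψ i (Function.update x i (x i)) :=
        inf'_le _ (mem_univ x)
    _ = modifiedObjective E W lam Ψ i x := by rw [Function.update_eq_self]

theorem coopT_apply_eq_modifiedObjective {i : Fin n} {xt : (j : Fin n) → D j}
    (hmin : ∀ x, modifiedObjective E W lam Ψ i xt ≤ modifiedObjective E W lam Ψ i x) :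
    coopT E W lam Ψ i (xt i) = modifiedObjective E W lam Ψ i xt :=
  le_antisymm (coopT_apply_le_modifiedObjective E W lam Ψ i xt)
    (le_inf' _ _ fun y _ => hmin (Function.update y i (xt i)))

variable {E W lam Ψ}

theorem sum_apply_le_objective_of_coopT_eq (hW : ∀ j, ∑ i, W i j = 1) (hlam1 : lam < 1)
    (hfix : coopT E W lam Ψ = Ψ) (x : (j : Fin n) → D j) :
    ∑ j, Ψ j (x j) ≤ objective E x := by
  have hle : ∑ j, Ψ j (x j) ≤ (1 - lam) * objective E x + lam * ∑ j, Ψ j (x j) := by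
    rw [← sum_modifiedObjective E W lam Ψ hW]
    exact sum_le_sum fun i _ => (congrFun₂ hfix i (x i)).symm.trans_le
      (coopT_apply_le_modifiedObjective E W lam Ψ i x)
  exact le_of_mul_le_mul_left (by linarith) (sub_pos.2 hlam1)

theorem sum_apply_eq_objective_of_isConsensusState (hW : ∀ j, ∑ i, W i j = 1)
    (hlam1 : lam < 1) (hfix : coopT E W lam Ψ = Ψ) {xt : (j : Fin n) → D j}
    (hcons : IsConsensusState E W lam Ψ xt) :
    ∑ j, Ψ j (xt j) = objective E xt := by
  have heq : ∑ j, Ψ j (xt j) = (1 - lam) * objective E xt + lam * ∑ j, Ψ j (xt j) := by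
    rw [← sum_modifiedObjective E W lam Ψ hW]
    exact sum_congr rfl fun i _ =>
      (congrFun₂ hfix i (xt i)).symm.trans
        (coopT_apply_eq_modifiedObjective E W lam Ψ (hcons i))
  exact mul_left_cancel₀ (sub_pos.2 hlam1).ne' (by linarith)

end CooperativeOptimization

theorem consensus_at_equilibrium_global_min_general (n : ℕ) (D : Fin n → Type)
    [∀ i, Fintype (D i)] [∀ i, Nonempty (D i)]
    (E : Fin n → ((i : Fin n) → D i) → ℝ) (W : Fin n → Fin n → ℝ)
    (hW : IsPropagationMatrix W) (lam : ℝ) (hlam0 : 0 ≤ lam) (hlam1 : lam < 1)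
    (Ψinf : (i : Fin n) → D i → ℝ) (hfix : coopT E W lam Ψinf = Ψinf)
    (xt : (i : Fin n) → D i) (hcons : IsConsensusState E W lam Ψinf xt) :
    ∀ x : (i : Fin n) → D i, objective E xt ≤ objective E x := by
  intro x
  have hxt := sum_apply_eq_objective_of_isConsensusState hW.2 hlam1 hfix hcons
  have hx := sum_apply_le_objective_of_coopT_eq hW.2 hlam1 hfix x
  calc objective E xt
      = (1 - lam) * objective E xt + lam * ∑ j, Ψinf j (xt j) := by rw [hxt]; ring
    _ = ∑ i, modifiedObjective E W lam Ψinf i xt :=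
        (sum_modifiedObjective E W lam Ψinf hW.2 xt).symm
    _ ≤ ∑ i, modifiedObjective E W lam Ψinf i x := sum_le_sum fun i _ => hcons i x
    _ = (1 - lam) * objective E x + lam * ∑ j, Ψinf j (x j) :=
        sum_modifiedObjective E W lam Ψinf hW.2 x
    _ ≤ (1 - lam) * objective E x + lam * objective E x := by gcongr
    _ = objective E x := by ring

/-- (Theorem 4.4) If `Ψ^{(∞)}` is a fixed point of `T_λ` and `x̃` is a
consensus solution at the equilibrium, then `x̃` is a global minimum of `E`. -/
theorem consensus_at_equilibrium_global_min (n : ℕ) (hn : 1 ≤ n) (D : Fin n → Type)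
    [∀ i, Fintype (D i)] [∀ i, Nonempty (D i)]
    (E : Fin n → ((i : Fin n) → D i) → ℝ) (W : Fin n → Fin n → ℝ)
    (hW : IsPropagationMatrix W) (lam : ℝ) (hlam0 : 0 ≤ lam) (hlam1 : lam < 1)
    (Ψinf : (i : Fin n) → D i → ℝ) (hfix : coopT E W lam Ψinf = Ψinf)
    (xt : (i : Fin n) → D i) (hcons : IsConsensusState E W lam Ψinf xt) :
    ∀ x : (i : Fin n) → D i, objective E xt ≤ objective E x :=
  consensus_at_equilibrium_global_min_general n D E W hW lam hlam0 hlam1 Ψinf hfix xt hcons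
end

section
/- Let λ ∈ [0,1), let W be a propagation matrix, and let Ψ be a state whose associated lower bound function is valid, i.e., ∑_{j=1}^n Ψ_j(x_j) ≤ E(x) for every configuration x. Then the updated state Ψ' = T_λ(Ψ) again defines a lower bound function: ∑_{i=1}^n Ψ'_i(x_i) ≤ E(x) for every configuration x. -/
open Finset Filter Topology

/-! Evaluating the minimum that defines `T_λ(Ψ)_i(x_i)` at `x` itself bounds it by
`(1-λ) E_i(x) + λ ∑_j w_{ij} Ψ_j(x_j)`. Summed over `i`, the unit column sums of `W` collapse
the second part to `λ ∑_j Ψ_j(x_j) ≤ λ E(x)`, leaving `(1-λ) E(x) + λ E(x) = E(x)`. -/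

theorem sum_sum_mul_of_sum_eq_one {ι κ R : Type*} [Fintype ι] [Fintype κ] [CommSemiring R]
    (W : ι → κ → R) (hW : ∀ j, ∑ i, W i j = 1) (f : κ → R) :
    ∑ i, ∑ j, W i j * f j = ∑ j, f j := by
  rw [Finset.sum_comm]
  simp only [← Finset.sum_mul, hW, one_mul]

theorem coopT_apply_le {n : ℕ} {D : Fin n → Type} [∀ i, Fintype (D i)] [∀ i, Nonempty (D i)]
    (E : Fin n → ((i : Fin n) → D i) → ℝ) (W : Fin n → Fin n → ℝ) (lam : ℝ)
    (Ψ : (i : Fin n) → D i → ℝ) (x : (i : Fin n) → D i) (i : Fin n) :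
    coopT E W lam Ψ i (x i) ≤ (1 - lam) * E i x + lam * ∑ j, W i j * Ψ j (x j) :=
  (Finset.inf'_le _ (Finset.mem_univ x)).trans_eq (by rw [Function.update_eq_self])

theorem sum_coopT_apply_le {n : ℕ} {D : Fin n → Type} [∀ i, Fintype (D i)]
    [∀ i, Nonempty (D i)] (E : Fin n → ((i : Fin n) → D i) → ℝ) (W : Fin n → Fin n → ℝ)
    (hW : ∀ j, ∑ i, W i j = 1) (lam : ℝ) (Ψ : (i : Fin n) → D i → ℝ)
    (x : (i : Fin n) → D i) :
    ∑ i, coopT E W lam Ψ i (x i) ≤ (1 - lam) * objective E x + lam * ∑ j, Ψ j (x j) :=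
  calc ∑ i, coopT E W lam Ψ i (x i)
      ≤ ∑ i, ((1 - lam) * E i x + lam * ∑ j, W i j * Ψ j (x j)) :=
        Finset.sum_le_sum fun i _ => coopT_apply_le E W lam Ψ x i
    _ = (1 - lam) * objective E x + lam * ∑ j, Ψ j (x j) := by
        rw [Finset.sum_add_distrib, ← Finset.mul_sum, ← Finset.mul_sum, objective,
          sum_sum_mul_of_sum_eq_one W hW]

theorem update_preserves_lower_bound_general (n : ℕ) (D : Fin n → Type)
    [∀ i, Fintype (D i)] [∀ i, Nonempty (D i)]
    (E : Fin n → ((i : Fin n) → D i) → ℝ) (W : Fin n → Fin n → ℝ)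
    (hW : IsPropagationMatrix W) (lam : ℝ) (hlam0 : 0 ≤ lam)
    (Ψ : (i : Fin n) → D i → ℝ)
    (hΨ : ∀ x : (i : Fin n) → D i, ∑ j, Ψ j (x j) ≤ objective E x) :
    ∀ x : (i : Fin n) → D i, ∑ i, coopT E W lam Ψ i (x i) ≤ objective E x := by
  intro x
  calc ∑ i, coopT E W lam Ψ i (x i)
      ≤ (1 - lam) * objective E x + lam * ∑ j, Ψ j (x j) := sum_coopT_apply_le E W hW.2 lam Ψ x
    _ ≤ (1 - lam) * objective E x + lam * objective E x := by gcongr; exact hΨ x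
    _ = objective E x := by ring

/-- If the state `Ψ` defines a lower bound function on the objective,
then so does the updated state `T_λ(Ψ)`. -/
theorem update_preserves_lower_bound (n : ℕ) (hn : 1 ≤ n) (D : Fin n → Type)
    [∀ i, Fintype (D i)] [∀ i, Nonempty (D i)]
    (E : Fin n → ((i : Fin n) → D i) → ℝ) (W : Fin n → Fin n → ℝ)
    (hW : IsPropagationMatrix W) (lam : ℝ) (hlam0 : 0 ≤ lam) (hlam1 : lam < 1)
    (Ψ : (i : Fin n) → D i → ℝ)
    (hΨ : ∀ x : (i : Fin n) → D i, ∑ j, Ψ j (x j) ≤ objective E x) :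
    ∀ x : (i : Fin n) → D i, ∑ i, coopT E W lam Ψ i (x i) ≤ objective E x :=
  update_preserves_lower_bound_general n D E W hW lam hlam0 Ψ hΨ
end
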